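/- arXiv:1710.03666 — 2 statements merged into one kernel-verified Lean document; each statement's English description precedes it below -/
import Mathlib

section
/- In an extensive inverse category, for any morphism f : A → B ⊕ C, the component ∐₁† ∘ ⟨f⟩ of the decision ⟨f⟩ is a restriction idempotent: \overline{∐₁† ∘ ⟨f⟩} = ∐₁† ∘ ⟨f⟩ (and similarly for ∐₂). -/
open CategoryTheory

universe v u

/-- A restriction category: a category equipped with a combinator assigning to each
morphism `f : A ⟶ B` a restriction idempotent `rest f : A ⟶ A` satisfying the four
restriction axioms. (Note: `f ≫ g` denotes `g ∘ f`.) -/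
class RestrictionCategory (C : Type u) [Category.{v} C] where
  rest : ∀ {A B : C}, (A ⟶ B) → (A ⟶ A)
  /-- (R1) f ∘ \overline{f} = f -/
  comp_rest : ∀ {A B : C} (f : A ⟶ B), rest f ≫ f = f
  /-- (R2) \overline{g} ∘ \overline{f} = \overline{f} ∘ \overline{g} -/
  rest_comm : ∀ {A B B' : C} (f : A ⟶ B) (g : A ⟶ B'), rest f ≫ rest g = rest g ≫ rest f
  /-- (R3) \overline{f ∘ \overline{g}} = \overline{f} ∘ \overline{g} -/
  rest_comp_rest : ∀ {A B B' : C} (f : A ⟶ B) (g : A ⟶ B'),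
    rest (rest g ≫ f) = rest g ≫ rest f
  /-- (R4) \overline{g} ∘ f = f ∘ \overline{g ∘ f} -/
  rest_swap : ∀ {A B B' : C} (f : A ⟶ B) (g : B ⟶ B'),
    f ≫ rest g = rest (f ≫ g) ≫ f

open RestrictionCategory

/-- An inverse category: a restriction category in which every morphism is a partial
isomorphism, with `dag f` its (necessarily unique) partial inverse. -/
class InverseCategory (C : Type u) [Category.{v} C] extends RestrictionCategory C where
  dag : ∀ {A B : C}, (A ⟶ B) → (B ⟶ A)
  /-- f† ∘ f = \overline{f} -/
  comp_dag : ∀ {A B : C} (f : A ⟶ B), f ≫ dag f = rest f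
  /-- f ∘ f† = \overline{f†} -/
  dag_comp : ∀ {A B : C} (f : A ⟶ B), dag f ≫ f = rest (dag f)

open InverseCategory

open Limits MonoidalCategory

variable (C : Type u) [Category.{v} C] [MonoidalCategory C] [SymmetricCategory C]
  [HasZeroMorphisms C] [RestrictionCategory C]

/-- The first quasi-injection ∐₁ = (id ⊕ 0) ∘ ρ⁻¹ : A → A ⊕ B of a disjointness tensor
(writing the tensor as ⊗). -/
def qinl (A B : C) : A ⟶ A ⊗ B := (ρ_ A).inv ≫ (𝟙 A ⊗ₘ (0 : (𝟙_ C) ⟶ B))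

/-- The second quasi-injection ∐₂ = (0 ⊕ id) ∘ λ⁻¹ : B → A ⊕ B. -/
def qinr (A B : C) : B ⟶ A ⊗ B := (λ_ B).inv ≫ ((0 : (𝟙_ C) ⟶ A) ⊗ₘ 𝟙 B)

/-- A disjointness tensor on a restriction category: a symmetric monoidal restriction
functor `⊗` whose unit is the restriction zero object, and whose quasi-injections are
jointly epic. -/
class DisjointnessTensor : Prop where
  /-- The monoidal unit is a zero object. -/
  unit_isZero : IsZero (𝟙_ C)
  /-- The zero object is a restriction zero. -/
  rest_zero : ∀ A : C, rest (0 : A ⟶ A) = (0 : A ⟶ A)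
  /-- The tensor is a restriction functor. -/
  rest_tensor : ∀ {A B A' B' : C} (f : A ⟶ B) (g : A' ⟶ B'),
    rest (f ⊗ₘ g) = rest f ⊗ₘ rest g
  /-- The quasi-injections are jointly epic. -/
  jointly_epic : ∀ {A B X : C} (f g : A ⊗ B ⟶ X),
    qinl C A B ≫ f = qinl C A B ≫ g → qinr C A B ≫ f = qinr C A B ≫ g → f = g

open InverseCategory

variable [InverseCategory C]

/-- The natural order on hom-sets: f ≤ g iff g ∘ \overline{f} = f. -/
def rle {A B : C} (f g : A ⟶ B) : Prop := rest f ≫ g = f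

/-- Disjointness of parallel morphisms in an inverse category:
f ∘ \overline{g} = 0 and f† ∘ \overline{g†} = 0. -/
def RDisjoint {A B : C} (f g : A ⟶ B) : Prop :=
  rest g ≫ f = 0 ∧ rest (dag g) ≫ dag f = 0

/-- An inverse category with (finite) disjoint joins: every pair of disjoint parallel
morphisms has a join `jn f g` which is a least upper bound, whose restriction is the
join of the restrictions, and which is preserved by pre- and post-composition. -/
class DisjointJoins : Type (max u v) where
  jn : ∀ {A B : C}, (A ⟶ B) → (A ⟶ B) → (A ⟶ B)
  le_jn_left : ∀ {A B : C} {f g : A ⟶ B}, RDisjoint C f g → rle C f (jn f g)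
  le_jn_right : ∀ {A B : C} {f g : A ⟶ B}, RDisjoint C f g → rle C g (jn f g)
  jn_le : ∀ {A B : C} {f g h : A ⟶ B}, RDisjoint C f g →
    rle C f h → rle C g h → rle C (jn f g) h
  rest_jn : ∀ {A B : C} {f g : A ⟶ B}, RDisjoint C f g →
    rest (jn f g) = jn (rest f) (rest g)
  jn_comp : ∀ {A B X : C} {f g : A ⟶ B}, RDisjoint C f g → ∀ h : B ⟶ X,
    jn f g ≫ h = jn (f ≫ h) (g ≫ h)
  comp_jn : ∀ {A B X : C} {f g : A ⟶ B}, RDisjoint C f g → ∀ h : X ⟶ A,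
    h ≫ jn f g = jn (h ≫ f) (h ≫ g)

open DisjointJoins

variable [DisjointJoins C]

/-- `d : A ⟶ A ⊕ A` is a decision for `f : A ⟶ B ⊕ C'` when it satisfies
(D'.1) (∐₁† ∘ d) ∨ (∐₂† ∘ d) = \overline{f} and (D'.2) (f ⊕ f) ∘ d = (∐₁ ⊕ ∐₂) ∘ f. -/
def IsDecision {A B B' : C} (f : A ⟶ B ⊗ B') (d : A ⟶ A ⊗ A) : Prop :=
  jn (d ≫ dag (qinl C A A)) (d ≫ dag (qinr C A A)) = rest f ∧
  d ≫ (f ⊗ₘ f) = f ≫ (qinl C B B' ⊗ₘ qinr C B B')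

/-- An extensive inverse category: every morphism f : A ⟶ B ⊕ C has a unique decision. -/
class ExtensiveInverseCategory : Type (max u v) where
  dec : ∀ {A B B' : C}, (A ⟶ B ⊗ B') → (A ⟶ A ⊗ A)
  dec_isDecision : ∀ {A B B' : C} (f : A ⟶ B ⊗ B'), IsDecision C f (dec f)
  dec_unique : ∀ {A B B' : C} (f : A ⟶ B ⊗ B') (d : A ⟶ A ⊗ A),
    IsDecision C f d → d = dec f

open ExtensiveInverseCategory

section AuxLemmas

set_option linter.unusedSectionVars false

variable {C : Type u} [Category.{v} C] [MonoidalCategory C] [SymmetricCategory C]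
  [HasZeroMorphisms C] [InverseCategory C] [DisjointnessTensor C]

lemma my_rest_one (A : C) : rest (𝟙 A) = 𝟙 A := by
  have h := comp_rest (𝟙 A)
  simpa using h

lemma my_rest_rest {A B : C} (f : A ⟶ B) : rest (rest f) = rest f := by
  have h := rest_comp_rest (𝟙 A) f
  simpa [my_rest_one] using h

lemma my_rest_idem {A B : C} (f : A ⟶ B) : rest f ≫ rest f = rest f := by
  have h := rest_comp_rest f f
  rw [comp_rest] at h
  exact h.symm

lemma my_rest_absorb {A B X : C} (f : A ⟶ B) (g : B ⟶ X) :
    rest f ≫ rest (f ≫ g) = rest (f ≫ g) := by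
  have h := rest_comp_rest (f ≫ g) f
  rw [← Category.assoc, comp_rest] at h
  exact h.symm

lemma my_rest_absorb' {A B X : C} (f : A ⟶ B) (g : B ⟶ X) :
    rest (f ≫ g) ≫ rest f = rest (f ≫ g) := by
  rw [← rest_comm, my_rest_absorb]

lemma my_rest_comp' {A B X : C} (f : A ⟶ B) (g : B ⟶ X) :
    rest (f ≫ rest g) = rest (f ≫ g) := by
  rw [rest_swap f g, rest_comp_rest, my_rest_absorb']

lemma my_rest_iso {X Y : C} (e : X ≅ Y) : rest e.hom = 𝟙 X := by
  have h : rest e.hom = rest e.hom ≫ e.hom ≫ e.inv := by simp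
  rw [h, ← Category.assoc, comp_rest, e.hom_inv_id]

lemma my_rest_iso_inv {X Y : C} (e : X ≅ Y) : rest e.inv = 𝟙 Y :=
  my_rest_iso e.symm

lemma my_rest_zero {A X : C} : rest (0 : A ⟶ X) = 0 := by
  have h := rest_comp_rest (0 : A ⟶ X) (0 : A ⟶ A)
  rw [DisjointnessTensor.rest_zero] at h
  simpa using h

lemma my_dag_unique {A B : C} (f : A ⟶ B) (g : B ⟶ A)
    (h1 : f ≫ g = rest f) (h2 : g ≫ f = rest g) : g = dag f := by
  have ha : g ≫ rest f = g := by
    rw [rest_swap g f, h2, my_rest_rest, comp_rest]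
  have hb : dag f ≫ rest f = dag f := by
    rw [rest_swap (dag f) f, dag_comp, my_rest_rest, comp_rest]
  have hd : g = rest g ≫ dag f := by
    conv_lhs => rw [← ha, ← comp_dag f, ← Category.assoc, h2]
  have he : dag f = rest (dag f) ≫ g := by
    conv_lhs => rw [← hb, ← h1, ← Category.assoc, dag_comp]
  have hrg : rest g = rest g ≫ rest (dag f) := by
    rw [← rest_comp_rest, ← hd]
  have hrk : rest (dag f) = rest (dag f) ≫ rest g := by
    rw [← rest_comp_rest, ← he]
  have hreq : rest g = rest (dag f) := by
    rw [hrg, rest_comm, ← hrk]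
  rw [hd, hreq, comp_rest]

lemma my_dag_dag {A B : C} (f : A ⟶ B) : dag (dag f) = f :=
  (my_dag_unique (dag f) f (dag_comp f) (comp_dag f)).symm

lemma my_dag_rest {A B : C} (f : A ⟶ B) : dag (rest f) = rest f :=
  (my_dag_unique (rest f) (rest f)
    (by rw [my_rest_idem, my_rest_rest]) (by rw [my_rest_idem, my_rest_rest])).symm

lemma my_dag_comp {A B X : C} (a : A ⟶ B) (b : B ⟶ X) :
    dag (a ≫ b) = dag b ≫ dag a := by
  refine (my_dag_unique (a ≫ b) (dag b ≫ dag a) ?_ ?_).symm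
  · calc (a ≫ b) ≫ dag b ≫ dag a = a ≫ (b ≫ dag b) ≫ dag a := by
          simp only [Category.assoc]
      _ = a ≫ rest b ≫ dag a := by rw [comp_dag]
      _ = (rest (a ≫ b) ≫ a) ≫ dag a := by rw [← Category.assoc, rest_swap]
      _ = rest (a ≫ b) ≫ rest a := by rw [Category.assoc, comp_dag]
      _ = rest (a ≫ b) := my_rest_absorb' a b
  · calc (dag b ≫ dag a) ≫ a ≫ b = dag b ≫ (dag a ≫ a) ≫ b := by
          simp only [Category.assoc]
      _ = dag b ≫ rest (dag a) ≫ b := by rw [dag_comp]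
      _ = (rest (dag b ≫ dag a) ≫ dag b) ≫ b := by rw [← Category.assoc, rest_swap]
      _ = rest (dag b ≫ dag a) ≫ rest (dag b) := by rw [Category.assoc, dag_comp]
      _ = rest (dag b ≫ dag a) := my_rest_absorb' (dag b) (dag a)

lemma my_dag_zero {A B : C} : dag (0 : A ⟶ B) = 0 :=
  (my_dag_unique 0 0 (by rw [zero_comp, my_rest_zero]) (by rw [zero_comp, my_rest_zero])).symm

lemma my_qinl_tensor {A B A' B' : C} (u : A ⟶ A') (v : B ⟶ B') :
    qinl C A B ≫ (u ⊗ₘ v) = u ≫ qinl C A' B' := by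
  unfold qinl
  rw [Category.assoc, tensorHom_comp_tensorHom]
  simp only [Category.id_comp, zero_comp]
  rw [show (u ⊗ₘ (0 : 𝟙_ C ⟶ B')) = (u ⊗ₘ 𝟙 (𝟙_ C)) ≫ (𝟙 A' ⊗ₘ (0 : 𝟙_ C ⟶ B')) by
        rw [tensorHom_comp_tensorHom]; simp]
  rw [← Category.assoc, tensorHom_id, ← rightUnitor_inv_naturality, Category.assoc]

lemma my_qinr_tensor {A B A' B' : C} (u : A ⟶ A') (v : B ⟶ B') :
    qinr C A B ≫ (u ⊗ₘ v) = v ≫ qinr C A' B' := by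
  unfold qinr
  rw [Category.assoc, tensorHom_comp_tensorHom]
  simp only [Category.id_comp, zero_comp]
  rw [show ((0 : 𝟙_ C ⟶ A') ⊗ₘ v) = (𝟙 (𝟙_ C) ⊗ₘ v) ≫ ((0 : 𝟙_ C ⟶ A') ⊗ₘ 𝟙 B') by
        rw [tensorHom_comp_tensorHom]; simp]
  rw [← Category.assoc, id_tensorHom, ← leftUnitor_inv_naturality, Category.assoc]

lemma my_rest_qinl (A B : C) : rest (qinl C A B) = 𝟙 A := by
  have hz : rest (0 : 𝟙_ C ⟶ B) = 𝟙 (𝟙_ C) :=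
    (DisjointnessTensor.unit_isZero (C := C)).eq_of_src _ _
  unfold qinl
  rw [← my_rest_comp', DisjointnessTensor.rest_tensor, my_rest_one, hz, id_tensorHom_id,
    Category.comp_id, my_rest_iso_inv]

lemma my_rest_qinr (A B : C) : rest (qinr C A B) = 𝟙 B := by
  have hz : rest (0 : 𝟙_ C ⟶ A) = 𝟙 (𝟙_ C) :=
    (DisjointnessTensor.unit_isZero (C := C)).eq_of_src _ _
  unfold qinr
  rw [← my_rest_comp', DisjointnessTensor.rest_tensor, my_rest_one, hz, id_tensorHom_id,
    Category.comp_id, my_rest_iso_inv]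

lemma my_dag_qinl (A B : C) :
    dag (qinl C A B) = (𝟙 A ⊗ₘ (0 : B ⟶ 𝟙_ C)) ≫ (ρ_ A).hom := by
  have hz := DisjointnessTensor.unit_isZero (C := C)
  have h0 : ((0 : 𝟙_ C ⟶ B) ≫ (0 : B ⟶ 𝟙_ C)) = 𝟙 (𝟙_ C) := hz.eq_of_src _ _
  refine (my_dag_unique _ _ ?_ ?_).symm
  · rw [my_rest_qinl]
    unfold qinl
    simp only [Category.assoc]
    slice_lhs 2 3 => rw [tensorHom_comp_tensorHom]
    rw [Category.id_comp, h0, id_tensorHom_id]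
    simp
  · have hr : rest ((𝟙 A ⊗ₘ (0 : B ⟶ 𝟙_ C)) ≫ (ρ_ A).hom) = 𝟙 A ⊗ₘ (0 : B ⟶ B) := by
      rw [← my_rest_comp', my_rest_iso, Category.comp_id, DisjointnessTensor.rest_tensor,
        my_rest_one, my_rest_zero]
    rw [hr]
    unfold qinl
    simp only [Category.assoc]
    slice_lhs 2 3 => rw [Iso.hom_inv_id]
    rw [Category.id_comp, tensorHom_comp_tensorHom]
    simp

lemma my_dag_qinr (A B : C) :
    dag (qinr C A B) = ((0 : A ⟶ 𝟙_ C) ⊗ₘ 𝟙 B) ≫ (λ_ B).hom := by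
  have hz := DisjointnessTensor.unit_isZero (C := C)
  have h0 : ((0 : 𝟙_ C ⟶ A) ≫ (0 : A ⟶ 𝟙_ C)) = 𝟙 (𝟙_ C) := hz.eq_of_src _ _
  refine (my_dag_unique _ _ ?_ ?_).symm
  · rw [my_rest_qinr]
    unfold qinr
    simp only [Category.assoc]
    slice_lhs 2 3 => rw [tensorHom_comp_tensorHom]
    rw [Category.id_comp, h0, id_tensorHom_id]
    simp
  · have hr : rest (((0 : A ⟶ 𝟙_ C) ⊗ₘ 𝟙 B) ≫ (λ_ B).hom) = (0 : A ⟶ A) ⊗ₘ 𝟙 B := by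
      rw [← my_rest_comp', my_rest_iso, Category.comp_id, DisjointnessTensor.rest_tensor,
        my_rest_one, my_rest_zero]
    rw [hr]
    unfold qinr
    simp only [Category.assoc]
    slice_lhs 2 3 => rw [Iso.hom_inv_id]
    rw [Category.id_comp, tensorHom_comp_tensorHom]
    simp

lemma my_zero_tensor_zero {A B : C} :
    ((0 : 𝟙_ C ⟶ A) ⊗ₘ (0 : B ⟶ 𝟙_ C)) = 0 := by
  have hz : IsZero ((𝟙_ C) ⊗ (𝟙_ C)) :=
    (DisjointnessTensor.unit_isZero (C := C)).of_iso (λ_ (𝟙_ C))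
  have h1 : ((0 : 𝟙_ C ⟶ A) ⊗ₘ (0 : B ⟶ 𝟙_ C))
      = (𝟙 (𝟙_ C) ⊗ₘ (0 : B ⟶ 𝟙_ C)) ≫ ((0 : 𝟙_ C ⟶ A) ⊗ₘ 𝟙 (𝟙_ C)) := by
    rw [tensorHom_comp_tensorHom]; simp
  rw [h1, hz.eq_of_src ((0 : 𝟙_ C ⟶ A) ⊗ₘ 𝟙 (𝟙_ C)) 0, comp_zero]

lemma my_zero_tensor_zero' {A B : C} :
    ((0 : A ⟶ 𝟙_ C) ⊗ₘ (0 : 𝟙_ C ⟶ B)) = 0 := by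
  have hz : IsZero ((𝟙_ C) ⊗ (𝟙_ C)) :=
    (DisjointnessTensor.unit_isZero (C := C)).of_iso (λ_ (𝟙_ C))
  have h1 : ((0 : A ⟶ 𝟙_ C) ⊗ₘ (0 : 𝟙_ C ⟶ B))
      = ((0 : A ⟶ 𝟙_ C) ⊗ₘ 𝟙 (𝟙_ C)) ≫ (𝟙 (𝟙_ C) ⊗ₘ (0 : 𝟙_ C ⟶ B)) := by
    rw [tensorHom_comp_tensorHom]; simp
  rw [h1, hz.eq_of_src (𝟙 (𝟙_ C) ⊗ₘ (0 : 𝟙_ C ⟶ B)) 0, comp_zero]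

lemma my_qinr_dag_qinl (A B : C) : qinr C A B ≫ dag (qinl C A B) = 0 := by
  rw [my_dag_qinl]
  unfold qinr
  simp only [Category.assoc]
  slice_lhs 2 3 => rw [tensorHom_comp_tensorHom]
  rw [Category.comp_id, Category.id_comp, my_zero_tensor_zero]
  simp

lemma my_qinl_dag_qinr (A B : C) : qinl C A B ≫ dag (qinr C A B) = 0 := by
  rw [my_dag_qinr]
  unfold qinl
  simp only [Category.assoc]
  slice_lhs 2 3 => rw [tensorHom_comp_tensorHom]
  rw [Category.comp_id, Category.id_comp, my_zero_tensor_zero']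
  simp

lemma my_qinl_dag_qinl (A B : C) : qinl C A B ≫ dag (qinl C A B) = 𝟙 A := by
  rw [comp_dag, my_rest_qinl]

lemma my_qinr_dag_qinr (A B : C) : qinr C A B ≫ dag (qinr C A B) = 𝟙 B := by
  rw [comp_dag, my_rest_qinr]

lemma my_r21 (A B : C) :
    rest (dag (qinr C A B)) ≫ rest (dag (qinl C A B)) = 0 := by
  rw [← dag_comp, ← dag_comp]
  slice_lhs 2 3 => rw [my_qinr_dag_qinl]
  simp

lemma my_qinl_r1 (A B : C) : qinl C A B ≫ rest (dag (qinl C A B)) = qinl C A B := by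
  rw [← dag_comp, ← Category.assoc, my_qinl_dag_qinl, Category.id_comp]

lemma my_qinl_r2 (A B : C) : qinl C A B ≫ rest (dag (qinr C A B)) = 0 := by
  rw [← dag_comp, ← Category.assoc, my_qinl_dag_qinr, zero_comp]

lemma my_qinr_r2 (A B : C) : qinr C A B ≫ rest (dag (qinr C A B)) = qinr C A B := by
  rw [← dag_comp, ← Category.assoc, my_qinr_dag_qinr, Category.id_comp]

lemma my_qinr_r1 (A B : C) : qinr C A B ≫ rest (dag (qinl C A B)) = 0 := by
  rw [← dag_comp, ← Category.assoc, my_qinr_dag_qinl, zero_comp]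

lemma my_rdagqinr_dagqinl (A B : C) :
    rest (dag (qinr C A B)) ≫ dag (qinl C A B) = 0 := by
  rw [← dag_comp, Category.assoc, my_qinr_dag_qinl, comp_zero]

lemma my_rdagqinl_dagqinr (A B : C) :
    rest (dag (qinl C A B)) ≫ dag (qinr C A B) = 0 := by
  rw [← dag_comp, Category.assoc, my_qinl_dag_qinr, comp_zero]

section JoinLemmas

variable [DisjointJoins C]

lemma my_rle_refl {A B : C} (f : A ⟶ B) : rle C f f := comp_rest f

lemma my_rle_zero {A B : C} (f : A ⟶ B) : rle C 0 f := by
  unfold rle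
  rw [my_rest_zero, zero_comp]

lemma my_rdisj_zero_right {A B : C} (f : A ⟶ B) : RDisjoint C f 0 := by
  constructor
  · rw [my_rest_zero, zero_comp]
  · rw [my_dag_zero, my_rest_zero, zero_comp]

lemma my_rdisj_zero_left {A B : C} (f : A ⟶ B) : RDisjoint C 0 f := by
  constructor
  · rw [comp_zero]
  · rw [my_dag_zero, comp_zero]

lemma my_rle_antisymm {A B : C} {a b : A ⟶ B} (h1 : rle C a b) (h2 : rle C b a) :
    a = b := by
  unfold rle at h1 h2
  have e1 : rest a ≫ rest b = rest a := by rw [← rest_comp_rest, h1]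
  have e2 : rest b ≫ rest a = rest b := by rw [← rest_comp_rest, h2]
  have e3 : rest a = rest b := by rw [← e1, rest_comm, e2]
  rw [← h1, e3, comp_rest]

lemma my_jn_zero_right {A B : C} (f : A ⟶ B) : jn f 0 = f :=
  my_rle_antisymm (jn_le (my_rdisj_zero_right f) (my_rle_refl f) (my_rle_zero f))
    (le_jn_left (my_rdisj_zero_right f))

lemma my_jn_zero_left {A B : C} (f : A ⟶ B) : jn 0 f = f :=
  my_rle_antisymm (jn_le (my_rdisj_zero_left f) (my_rle_zero f) (my_rle_refl f))
    (le_jn_right (my_rdisj_zero_left f))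

lemma my_disj_r (P Q : C) :
    RDisjoint C (rest (dag (qinl C P Q))) (rest (dag (qinr C P Q))) := by
  constructor
  · rw [my_rest_rest]; exact my_r21 P Q
  · rw [my_dag_rest, my_dag_rest, my_rest_rest]; exact my_r21 P Q

lemma my_disj_w {V P Q : C} (w : V ⟶ P ⊗ Q) :
    RDisjoint C (w ≫ rest (dag (qinl C P Q))) (w ≫ rest (dag (qinr C P Q))) := by
  constructor
  · rw [← Category.assoc, ← rest_swap, my_rest_rest, Category.assoc, my_r21, comp_zero]
  · rw [my_dag_comp, my_dag_comp, my_dag_rest, my_dag_rest,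
      ← my_rest_absorb' (rest (dag (qinr C P Q))) (dag w), my_rest_rest]
    simp only [Category.assoc]
    slice_lhs 2 3 => rw [my_r21]
    simp

lemma my_disj_e {W Y Z : C} (p : W ⟶ Y) (q : W ⟶ Z)
    (h : rest q ≫ rest p = 0) :
    RDisjoint C (rest p ≫ qinl C W W) (rest q ≫ qinr C W W) := by
  constructor
  · rw [rest_comp_rest, my_rest_qinr, Category.comp_id, ← Category.assoc, h, zero_comp]
  · rw [my_dag_comp, my_dag_comp, my_dag_rest, my_dag_rest,
      ← my_rest_absorb' (dag (qinr C W W)) (rest q)]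
    simp only [Category.assoc]
    slice_lhs 2 3 => rw [my_rdagqinr_dagqinl]
    simp

lemma my_jn_r_one (P Q : C) :
    jn (rest (dag (qinl C P Q))) (rest (dag (qinr C P Q))) = 𝟙 (P ⊗ Q) := by
  apply DisjointnessTensor.jointly_epic
  · rw [comp_jn (my_disj_r P Q) (qinl C P Q), my_qinl_r1, my_qinl_r2, my_jn_zero_right,
      Category.comp_id]
  · rw [comp_jn (my_disj_r P Q) (qinr C P Q), my_qinr_r1, my_qinr_r2, my_jn_zero_left,
      Category.comp_id]

lemma my_qinl_r1_assoc (P Q : C) {X : C} (x : P ⊗ Q ⟶ X) :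
    qinl C P Q ≫ rest (dag (qinl C P Q)) ≫ x = qinl C P Q ≫ x := by
  rw [← Category.assoc, my_qinl_r1]

lemma my_qinl_r2_assoc (P Q : C) {X : C} (x : P ⊗ Q ⟶ X) :
    qinl C P Q ≫ rest (dag (qinr C P Q)) ≫ x = 0 := by
  rw [← Category.assoc, my_qinl_r2, zero_comp]

lemma my_qinr_r2_assoc (P Q : C) {X : C} (x : P ⊗ Q ⟶ X) :
    qinr C P Q ≫ rest (dag (qinr C P Q)) ≫ x = qinr C P Q ≫ x := by
  rw [← Category.assoc, my_qinr_r2]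

lemma my_qinr_r1_assoc (P Q : C) {X : C} (x : P ⊗ Q ⟶ X) :
    qinr C P Q ≫ rest (dag (qinl C P Q)) ≫ x = 0 := by
  rw [← Category.assoc, my_qinr_r1, zero_comp]

lemma my_L (B B' : C) :
    (qinl C B B' ⊗ₘ qinr C B B')
      = jn (rest (dag (qinl C B B')) ≫ qinl C (B ⊗ B') (B ⊗ B'))
           (rest (dag (qinr C B B')) ≫ qinr C (B ⊗ B') (B ⊗ B')) := by
  have disj := my_disj_e (dag (qinl C B B')) (dag (qinr C B B')) (my_r21 B B')
  apply DisjointnessTensor.jointly_epic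
  · rw [my_qinl_tensor, comp_jn disj (qinl C B B'), my_qinl_r1_assoc, my_qinl_r2_assoc,
      my_jn_zero_right]
  · rw [my_qinr_tensor, comp_jn disj (qinr C B B'), my_qinr_r1_assoc, my_qinr_r2_assoc,
      my_jn_zero_left]

end JoinLemmas

end AuxLemmas

/-- In an extensive inverse category, the components ∐ᵢ† ∘ ⟨f⟩ of a decision are
restriction idempotents. -/
theorem dec_component_rest {C : Type u} [Category.{v} C] [MonoidalCategory C]
    [SymmetricCategory C] [HasZeroMorphisms C] [InverseCategory C] [DisjointnessTensor C]
    [DisjointJoins C] [ExtensiveInverseCategory C]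
    {A B B' : C} (f : A ⟶ B ⊗ B') :
    rest (dec f ≫ dag (qinl C A A)) = dec f ≫ dag (qinl C A A) ∧
    rest (dec f ≫ dag (qinr C A A)) = dec f ≫ dag (qinr C A A) := by
  have key0 : rest (f ≫ dag (qinr C B B')) ≫ rest (f ≫ dag (qinl C B B')) = 0 := by
    rw [← rest_comp_rest, ← Category.assoc, ← rest_swap, Category.assoc,
      my_rdagqinr_dagqinl, comp_zero, my_rest_zero]
  have disjE : RDisjoint C (rest (f ≫ dag (qinl C B B')) ≫ qinl C A A)
      (rest (f ≫ dag (qinr C B B')) ≫ qinr C A A) :=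
    my_disj_e (f ≫ dag (qinl C B B')) (f ≫ dag (qinr C B B')) key0
  have hC1 : (jn (rest (f ≫ dag (qinl C B B')) ≫ qinl C A A)
        (rest (f ≫ dag (qinr C B B')) ≫ qinr C A A)) ≫ dag (qinl C A A)
      = rest (f ≫ dag (qinl C B B')) := by
    rw [jn_comp disjE (dag (qinl C A A))]
    simp only [Category.assoc]
    rw [my_qinl_dag_qinl, my_qinr_dag_qinl, Category.comp_id, comp_zero, my_jn_zero_right]
  have hC2 : (jn (rest (f ≫ dag (qinl C B B')) ≫ qinl C A A)
        (rest (f ≫ dag (qinr C B B')) ≫ qinr C A A)) ≫ dag (qinr C A A)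
      = rest (f ≫ dag (qinr C B B')) := by
    rw [jn_comp disjE (dag (qinr C A A))]
    simp only [Category.assoc]
    rw [my_qinl_dag_qinr, my_qinr_dag_qinr, Category.comp_id, comp_zero, my_jn_zero_left]
  have hD1 : jn (rest (f ≫ dag (qinl C B B'))) (rest (f ≫ dag (qinr C B B'))) = rest f := by
    have h : rest f = jn (rest (f ≫ dag (qinl C B B'))) (rest (f ≫ dag (qinr C B B'))) := by
      conv_lhs => rw [← Category.comp_id f]
      rw [← my_jn_r_one B B', comp_jn (my_disj_r B B') f, rest_jn (my_disj_w f),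
        my_rest_comp', my_rest_comp']
    exact h.symm
  have hD2 : (jn (rest (f ≫ dag (qinl C B B')) ≫ qinl C A A)
        (rest (f ≫ dag (qinr C B B')) ≫ qinr C A A)) ≫ (f ⊗ₘ f)
      = f ≫ (qinl C B B' ⊗ₘ qinr C B B') := by
    rw [jn_comp disjE (f ⊗ₘ f)]
    simp only [Category.assoc]
    rw [my_qinl_tensor f f, my_qinr_tensor f f,
      ← Category.assoc (rest (f ≫ dag (qinl C B B'))) f, ← rest_swap,
      ← Category.assoc (rest (f ≫ dag (qinr C B B'))) f, ← rest_swap]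
    simp only [Category.assoc]
    rw [← comp_jn (my_disj_e (dag (qinl C B B')) (dag (qinr C B B')) (my_r21 B B')) f,
      ← my_L]
  have hdec : IsDecision C f (jn (rest (f ≫ dag (qinl C B B')) ≫ qinl C A A)
      (rest (f ≫ dag (qinr C B B')) ≫ qinr C A A)) := ⟨by rw [hC1, hC2]; exact hD1, hD2⟩
  have hd := dec_unique f _ hdec
  constructor
  · rw [← hd, hC1, my_rest_rest]
  · rw [← hd, hC2, my_rest_rest]
end

section
/- In an extensive inverse category, every decision is recovered from its components: ⟨f⟩ = (∐₁ ∘ \overline{∐₁† ∘ ⟨f⟩}) ∨ (∐₂ ∘ \overline{∐₂† ∘ ⟨f⟩}), and moreover \overline{⟨f⟩} = \overline{f}. -/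
open CategoryTheory

universe v u

open RestrictionCategory

open InverseCategory

open Limits MonoidalCategory

variable (C : Type u) [Category.{v} C] [MonoidalCategory C] [SymmetricCategory C]
  [HasZeroMorphisms C] [RestrictionCategory C]

open InverseCategory

variable [InverseCategory C]

open DisjointJoins

variable [DisjointJoins C]

open ExtensiveInverseCategory

section AuxEIC
set_option linter.unusedSectionVars false

variable {D : Type u} [Category.{v} D] [MonoidalCategory D] [SymmetricCategory D]
  [HasZeroMorphisms D] [InverseCategory D] [DisjointnessTensor D] [DisjointJoins D]

/-! ### Basic restriction category lemmas -/

lemma aux_rest_id (A : D) : rest (𝟙 A) = 𝟙 A := by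
  simpa using comp_rest (𝟙 A)

lemma aux_rest_rest {A B : D} (f : A ⟶ B) : rest (rest f) = rest f := by
  simpa [aux_rest_id] using rest_comp_rest (𝟙 A) f

lemma aux_rest_idem {A B : D} (f : A ⟶ B) : rest f ≫ rest f = rest f := by
  have h := rest_comp_rest f f
  rw [comp_rest] at h
  exact h.symm

lemma aux_rest_comp_le {A B X : D} (f : A ⟶ B) (g : B ⟶ X) :
    rest f ≫ rest (f ≫ g) = rest (f ≫ g) := by
  have h : rest f ≫ (f ≫ g) = f ≫ g := by rw [← Category.assoc, comp_rest]
  calc rest f ≫ rest (f ≫ g) = rest (rest f ≫ (f ≫ g)) := (rest_comp_rest _ _).symm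
    _ = rest (f ≫ g) := by rw [h]

lemma aux_rest_comp' {A B X : D} (f : A ⟶ B) (g : B ⟶ X) :
    rest (f ≫ rest g) = rest (f ≫ g) := by
  rw [rest_swap f g, rest_comp_rest, ← rest_comm, aux_rest_comp_le]

lemma aux_rest_merge {A B X Y : D} (f : A ⟶ B) (g : B ⟶ X) (h : B ⟶ Y) :
    rest (f ≫ g) ≫ rest (f ≫ h) = rest (f ≫ rest g ≫ h) := by
  have e : rest (f ≫ g) ≫ (f ≫ h) = f ≫ rest g ≫ h := by
    rw [← Category.assoc, ← rest_swap, Category.assoc]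
  calc rest (f ≫ g) ≫ rest (f ≫ h) = rest (rest (f ≫ g) ≫ (f ≫ h)) :=
        (rest_comp_rest _ _).symm
    _ = rest (f ≫ rest g ≫ h) := by rw [e]

/-! ### Zero morphisms -/

lemma aux_unit_endo_eq (h : 𝟙_ D ⟶ 𝟙_ D) : h = 𝟙 (𝟙_ D) :=
  (DisjointnessTensor.unit_isZero (C := D)).eq_of_src _ _

lemma aux_rest_zero {A B : D} : rest (0 : A ⟶ B) = 0 := by
  have key : ∀ X : D, rest (0 : A ⟶ X) = rest (0 : A ⟶ 𝟙_ D) := by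
    intro X
    have h : (0 : A ⟶ X) = (0 : A ⟶ 𝟙_ D) ≫ (0 : 𝟙_ D ⟶ X) := by simp
    rw [h, ← aux_rest_comp', aux_unit_endo_eq (rest (0 : 𝟙_ D ⟶ X)), Category.comp_id]
  rw [key B, ← key A]
  exact DisjointnessTensor.rest_zero A

/-! ### Dagger lemmas -/

lemma aux_dag_eq {A B : D} (f : A ⟶ B) (g : B ⟶ A)
    (h1 : f ≫ g = rest f) (h2 : g ≫ f = rest g) : g = dag f := by
  have hf1 : f ≫ dag f = rest f := comp_dag f
  have hf2 : dag f ≫ f = rest (dag f) := dag_comp f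
  have e1 : g ≫ rest f = g := by rw [rest_swap g f, h2, aux_rest_rest, comp_rest]
  have e2 : dag f ≫ rest f = dag f := by
    rw [rest_swap (dag f) f, hf2, aux_rest_rest, comp_rest]
  have g1 : rest g ≫ dag f = g := by rw [← h2, Category.assoc, hf1, e1]
  have g2 : rest (dag f) ≫ g = dag f := by rw [← hf2, Category.assoc, h1, e2]
  have r1 : rest g = rest g ≫ rest (dag f) := by
    conv_lhs => rw [← g1]
    exact rest_comp_rest _ _
  have r2 : rest (dag f) = rest (dag f) ≫ rest g := by
    conv_lhs => rw [← g2]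
    exact rest_comp_rest _ _
  have req : rest g = rest (dag f) := by
    calc rest g = rest g ≫ rest (dag f) := r1
      _ = rest (dag f) ≫ rest g := rest_comm _ _
      _ = rest (dag f) := r2.symm
  calc g = rest g ≫ dag f := g1.symm
    _ = rest (dag f) ≫ dag f := by rw [req]
    _ = dag f := comp_rest _

lemma aux_dag_comp {A B X : D} (f : A ⟶ B) (g : B ⟶ X) :
    dag (f ≫ g) = dag g ≫ dag f := by
  refine (aux_dag_eq _ _ ?_ ?_).symm
  · calc (f ≫ g) ≫ dag g ≫ dag f = f ≫ (g ≫ dag g) ≫ dag f := by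
          simp only [Category.assoc]
      _ = f ≫ rest g ≫ dag f := by rw [comp_dag]
      _ = (f ≫ rest g) ≫ dag f := by rw [Category.assoc]
      _ = (rest (f ≫ g) ≫ f) ≫ dag f := by rw [rest_swap]
      _ = rest (f ≫ g) ≫ rest f := by rw [Category.assoc, comp_dag]
      _ = rest f ≫ rest (f ≫ g) := (rest_comm _ _).symm
      _ = rest (f ≫ g) := aux_rest_comp_le _ _
  · calc (dag g ≫ dag f) ≫ f ≫ g = dag g ≫ (dag f ≫ f) ≫ g := by
          simp only [Category.assoc]
      _ = dag g ≫ rest (dag f) ≫ g := by rw [dag_comp]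
      _ = (dag g ≫ rest (dag f)) ≫ g := by rw [Category.assoc]
      _ = (rest (dag g ≫ dag f) ≫ dag g) ≫ g := by rw [rest_swap]
      _ = rest (dag g ≫ dag f) ≫ rest (dag g) := by rw [Category.assoc, dag_comp]
      _ = rest (dag g) ≫ rest (dag g ≫ dag f) := (rest_comm _ _).symm
      _ = rest (dag g ≫ dag f) := aux_rest_comp_le _ _

lemma aux_dag_rest {A B : D} (f : A ⟶ B) : dag (rest f) = rest f := by
  refine (aux_dag_eq _ _ ?_ ?_).symm <;> rw [aux_rest_idem, aux_rest_rest]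

lemma aux_dag_zero {A B : D} : dag (0 : A ⟶ B) = 0 := by
  refine (aux_dag_eq _ _ ?_ ?_).symm <;> rw [aux_rest_zero, zero_comp]

lemma aux_dag_id (A : D) : dag (𝟙 A) = 𝟙 A := by
  rw [← aux_rest_id A, aux_dag_rest]

lemma aux_rest_iso {A B : D} (e : A ≅ B) : rest e.hom = 𝟙 A := by
  have h : rest e.hom ≫ e.hom = 𝟙 A ≫ e.hom := by rw [comp_rest, Category.id_comp]
  exact (cancel_mono e.hom).mp h

lemma aux_dag_iso {A B : D} (e : A ≅ B) : dag e.hom = e.inv := by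
  refine (aux_dag_eq _ _ ?_ ?_).symm
  · rw [e.hom_inv_id, aux_rest_iso]
  · rw [e.inv_hom_id]
    have h := aux_rest_iso e.symm
    simp only [Iso.symm_hom] at h
    rw [h]

lemma aux_dag_tensor {A B A' B' : D} (f : A ⟶ B) (g : A' ⟶ B') :
    dag (f ⊗ₘ g) = dag f ⊗ₘ dag g := by
  refine (aux_dag_eq _ _ ?_ ?_).symm
  · rw [tensorHom_comp_tensorHom, comp_dag, comp_dag, ← DisjointnessTensor.rest_tensor]
  · rw [tensorHom_comp_tensorHom, dag_comp, dag_comp, ← DisjointnessTensor.rest_tensor]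

/-! ### Quasi-injections and the idempotents E1, E2 -/

lemma aux_rest_unit_zero {X : D} : rest (0 : 𝟙_ D ⟶ X) = 𝟙 (𝟙_ D) :=
  aux_unit_endo_eq _

lemma aux_rest_qinl (A B : D) : rest (qinl D A B) = 𝟙 A := by
  unfold qinl
  rw [← aux_rest_comp', DisjointnessTensor.rest_tensor, aux_rest_id, aux_rest_unit_zero,
    id_tensorHom_id, Category.comp_id]
  have h := aux_rest_iso (ρ_ A).symm
  simpa using h

lemma aux_rest_qinr (A B : D) : rest (qinr D A B) = 𝟙 B := by
  unfold qinr
  rw [← aux_rest_comp', DisjointnessTensor.rest_tensor, aux_rest_id, aux_rest_unit_zero,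
    id_tensorHom_id, Category.comp_id]
  have h := aux_rest_iso (λ_ B).symm
  simpa using h

lemma aux_dag_qinl (A B : D) :
    dag (qinl D A B) = (𝟙 A ⊗ₘ (0 : B ⟶ 𝟙_ D)) ≫ (ρ_ A).hom := by
  unfold qinl
  rw [aux_dag_comp, aux_dag_tensor, aux_dag_id, aux_dag_zero]
  have h := aux_dag_iso (ρ_ A).symm
  simp only [Iso.symm_hom, Iso.symm_inv] at h
  rw [h]

lemma aux_dag_qinr (A B : D) :
    dag (qinr D A B) = ((0 : A ⟶ 𝟙_ D) ⊗ₘ 𝟙 B) ≫ (λ_ B).hom := by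
  unfold qinr
  rw [aux_dag_comp, aux_dag_tensor, aux_dag_id, aux_dag_zero]
  have h := aux_dag_iso (λ_ B).symm
  simp only [Iso.symm_hom, Iso.symm_inv] at h
  rw [h]

lemma aux_zero_tensor_zero {X Y X' Y' : D} :
    ((0 : X ⟶ Y) ⊗ₘ (0 : X' ⟶ Y')) = 0 := by
  have hz : IsZero ((𝟙_ D) ⊗ (𝟙_ D)) :=
    (DisjointnessTensor.unit_isZero (C := D)).of_iso (λ_ (𝟙_ D))
  calc (0 : X ⟶ Y) ⊗ₘ (0 : X' ⟶ Y')
      = ((0 : X ⟶ 𝟙_ D) ≫ (0 : 𝟙_ D ⟶ Y)) ⊗ₘ ((0 : X' ⟶ 𝟙_ D) ≫ (0 : 𝟙_ D ⟶ Y')) := by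
        rw [zero_comp, zero_comp]
    _ = ((0 : X ⟶ 𝟙_ D) ⊗ₘ (0 : X' ⟶ 𝟙_ D)) ≫ ((0 : 𝟙_ D ⟶ Y) ⊗ₘ (0 : 𝟙_ D ⟶ Y')) :=
        (tensorHom_comp_tensorHom _ _ _ _).symm
    _ = ((0 : X ⟶ 𝟙_ D) ⊗ₘ (0 : X' ⟶ 𝟙_ D)) ≫ 0 := by
        congr 1
        exact hz.eq_of_src _ _
    _ = 0 := comp_zero

/-- The idempotent `𝟙 ⊗ 0` on a tensor product. -/
def E1 (X Y : D) : X ⊗ Y ⟶ X ⊗ Y := 𝟙 X ⊗ₘ (0 : Y ⟶ Y)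

/-- The idempotent `0 ⊗ 𝟙` on a tensor product. -/
def E2 (X Y : D) : X ⊗ Y ⟶ X ⊗ Y := (0 : X ⟶ X) ⊗ₘ 𝟙 Y

lemma E1_E2 (X Y : D) : E1 X Y ≫ E2 X Y = 0 := by
  unfold E1 E2
  rw [tensorHom_comp_tensorHom, Category.id_comp, Category.comp_id]
  exact aux_zero_tensor_zero

lemma E2_E1 (X Y : D) : E2 X Y ≫ E1 X Y = 0 := by
  unfold E1 E2
  rw [tensorHom_comp_tensorHom, Category.id_comp, Category.comp_id]
  exact aux_zero_tensor_zero

lemma rest_E1 (X Y : D) : rest (E1 X Y) = E1 X Y := by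
  unfold E1
  rw [DisjointnessTensor.rest_tensor, aux_rest_id, aux_rest_zero]

lemma rest_E2 (X Y : D) : rest (E2 X Y) = E2 X Y := by
  unfold E2
  rw [DisjointnessTensor.rest_tensor, aux_rest_id, aux_rest_zero]

lemma dag_E1 (X Y : D) : dag (E1 X Y) = E1 X Y := by
  conv_lhs => rw [← rest_E1]
  rw [aux_dag_rest, rest_E1]

lemma dag_E2 (X Y : D) : dag (E2 X Y) = E2 X Y := by
  conv_lhs => rw [← rest_E2]
  rw [aux_dag_rest, rest_E2]

lemma qinl_E1 (X Y : D) : qinl D X Y ≫ E1 X Y = qinl D X Y := by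
  unfold qinl E1
  rw [Category.assoc, tensorHom_comp_tensorHom, Category.id_comp, zero_comp]

lemma qinl_E2 (X Y : D) : qinl D X Y ≫ E2 X Y = 0 := by
  unfold qinl E2
  rw [Category.assoc, tensorHom_comp_tensorHom, Category.id_comp, Category.comp_id,
    aux_zero_tensor_zero, comp_zero]

lemma qinr_E2 (X Y : D) : qinr D X Y ≫ E2 X Y = qinr D X Y := by
  unfold qinr E2
  rw [Category.assoc, tensorHom_comp_tensorHom, Category.id_comp, zero_comp]

lemma qinr_E1 (X Y : D) : qinr D X Y ≫ E1 X Y = 0 := by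
  unfold qinr E1
  rw [Category.assoc, tensorHom_comp_tensorHom, Category.id_comp, Category.comp_id,
    aux_zero_tensor_zero, comp_zero]

lemma qinl_dag_qinl (A B : D) : qinl D A B ≫ dag (qinl D A B) = 𝟙 A := by
  rw [comp_dag, aux_rest_qinl]

lemma qinr_dag_qinr (A B : D) : qinr D A B ≫ dag (qinr D A B) = 𝟙 B := by
  rw [comp_dag, aux_rest_qinr]

lemma E2_dag_qinl (X Y : D) : E2 X Y ≫ dag (qinl D X Y) = 0 := by
  have mid : E2 X Y ≫ (𝟙 X ⊗ₘ (0 : Y ⟶ 𝟙_ D)) = 0 := by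
    unfold E2
    rw [tensorHom_comp_tensorHom, Category.comp_id, Category.id_comp]
    exact aux_zero_tensor_zero
  rw [aux_dag_qinl, ← Category.assoc, mid, zero_comp]

lemma E1_dag_qinr (X Y : D) : E1 X Y ≫ dag (qinr D X Y) = 0 := by
  have mid : E1 X Y ≫ ((0 : X ⟶ 𝟙_ D) ⊗ₘ 𝟙 Y) = 0 := by
    unfold E1
    rw [tensorHom_comp_tensorHom, Category.comp_id, Category.id_comp]
    exact aux_zero_tensor_zero
  rw [aux_dag_qinr, ← Category.assoc, mid, zero_comp]

lemma qinr_dag_qinl (X Y : D) : qinr D X Y ≫ dag (qinl D X Y) = 0 := by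
  rw [← qinr_E2, Category.assoc, E2_dag_qinl, comp_zero]

lemma qinl_dag_qinr (X Y : D) : qinl D X Y ≫ dag (qinr D X Y) = 0 := by
  rw [← qinl_E1, Category.assoc, E1_dag_qinr, comp_zero]

lemma rest_dag_qinl (X Y : D) : rest (dag (qinl D X Y)) = E1 X Y := by
  rw [aux_dag_qinl, ← aux_rest_comp', aux_rest_iso (ρ_ X), Category.comp_id,
    DisjointnessTensor.rest_tensor, aux_rest_id, aux_rest_zero]
  rfl

lemma rest_dag_qinr (X Y : D) : rest (dag (qinr D X Y)) = E2 X Y := by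
  rw [aux_dag_qinr, ← aux_rest_comp', aux_rest_iso (λ_ Y), Category.comp_id,
    DisjointnessTensor.rest_tensor, aux_rest_id, aux_rest_zero]
  rfl

lemma qinl_natural {X Y X' Y' : D} (f : X ⟶ Y) (g : X' ⟶ Y') :
    qinl D X X' ≫ (f ⊗ₘ g) = f ≫ qinl D Y Y' := by
  unfold qinl
  calc ((ρ_ X).inv ≫ (𝟙 X ⊗ₘ (0 : 𝟙_ D ⟶ X'))) ≫ (f ⊗ₘ g)
      = (ρ_ X).inv ≫ ((𝟙 X ≫ f) ⊗ₘ ((0 : 𝟙_ D ⟶ X') ≫ g)) := by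
        rw [Category.assoc, tensorHom_comp_tensorHom]
    _ = (ρ_ X).inv ≫ ((f ≫ 𝟙 Y) ⊗ₘ (𝟙 (𝟙_ D) ≫ (0 : 𝟙_ D ⟶ Y'))) := by
        rw [Category.id_comp, zero_comp, Category.comp_id, Category.id_comp]
    _ = ((ρ_ X).inv ≫ (f ⊗ₘ 𝟙 (𝟙_ D))) ≫ (𝟙 Y ⊗ₘ (0 : 𝟙_ D ⟶ Y')) := by
        rw [← tensorHom_comp_tensorHom, Category.assoc]
    _ = ((ρ_ X).inv ≫ (f ▷ 𝟙_ D)) ≫ (𝟙 Y ⊗ₘ (0 : 𝟙_ D ⟶ Y')) := by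
        rw [tensorHom_id]
    _ = (f ≫ (ρ_ Y).inv) ≫ (𝟙 Y ⊗ₘ (0 : 𝟙_ D ⟶ Y')) := by
        rw [← rightUnitor_inv_naturality]
    _ = f ≫ (ρ_ Y).inv ≫ (𝟙 Y ⊗ₘ (0 : 𝟙_ D ⟶ Y')) := by rw [Category.assoc]

lemma qinr_natural {X Y X' Y' : D} (f : X ⟶ Y) (g : X' ⟶ Y') :
    qinr D X X' ≫ (f ⊗ₘ g) = g ≫ qinr D Y Y' := by
  unfold qinr
  calc ((λ_ X').inv ≫ ((0 : 𝟙_ D ⟶ X) ⊗ₘ 𝟙 X')) ≫ (f ⊗ₘ g)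
      = (λ_ X').inv ≫ (((0 : 𝟙_ D ⟶ X) ≫ f) ⊗ₘ (𝟙 X' ≫ g)) := by
        rw [Category.assoc, tensorHom_comp_tensorHom]
    _ = (λ_ X').inv ≫ ((𝟙 (𝟙_ D) ≫ (0 : 𝟙_ D ⟶ Y)) ⊗ₘ (g ≫ 𝟙 Y')) := by
        rw [Category.id_comp, zero_comp, Category.comp_id, Category.id_comp]
    _ = ((λ_ X').inv ≫ (𝟙 (𝟙_ D) ⊗ₘ g)) ≫ ((0 : 𝟙_ D ⟶ Y) ⊗ₘ 𝟙 Y') := by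
        rw [← tensorHom_comp_tensorHom, Category.assoc]
    _ = ((λ_ X').inv ≫ ((𝟙_ D) ◁ g)) ≫ ((0 : 𝟙_ D ⟶ Y) ⊗ₘ 𝟙 Y') := by
        rw [id_tensorHom]
    _ = (g ≫ (λ_ Y').inv) ≫ ((0 : 𝟙_ D ⟶ Y) ⊗ₘ 𝟙 Y') := by
        rw [← leftUnitor_inv_naturality]
    _ = g ≫ (λ_ Y').inv ≫ ((0 : 𝟙_ D ⟶ Y) ⊗ₘ 𝟙 Y') := by rw [Category.assoc]

/-! ### Order and join lemmas -/

lemma aux_rle_refl {A B : D} (f : A ⟶ B) : rle D f f := comp_rest f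

lemma aux_rle_zero {A B : D} (f : A ⟶ B) : rle D 0 f := by
  show rest (0 : A ⟶ B) ≫ f = (0 : A ⟶ B)
  rw [aux_rest_zero, zero_comp]

lemma aux_rle_antisymm {A B : D} {f g : A ⟶ B} (h1 : rle D f g) (h2 : rle D g f) :
    f = g := by
  replace h1 : rest f ≫ g = f := h1
  replace h2 : rest g ≫ f = g := h2
  have r1 : rest f = rest f ≫ rest g := by
    conv_lhs => rw [← h1]
    exact rest_comp_rest _ _
  have r2 : rest g = rest g ≫ rest f := by
    conv_lhs => rw [← h2]
    exact rest_comp_rest _ _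
  have req : rest f = rest g := by
    calc rest f = rest f ≫ rest g := r1
      _ = rest g ≫ rest f := rest_comm _ _
      _ = rest g := r2.symm
  calc f = rest f ≫ g := h1.symm
    _ = rest g ≫ g := by rw [req]
    _ = g := comp_rest _

lemma aux_rdisjoint_zero_right {A B : D} (f : A ⟶ B) : RDisjoint D f 0 := by
  constructor
  · rw [aux_rest_zero, zero_comp]
  · rw [aux_dag_zero, aux_rest_zero, zero_comp]

lemma aux_rdisjoint_zero_left {A B : D} (f : A ⟶ B) : RDisjoint D 0 f := by
  refine ⟨comp_zero, ?_⟩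
  rw [aux_dag_zero, comp_zero]

lemma aux_jn_zero {A B : D} (f : A ⟶ B) : jn f 0 = f :=
  aux_rle_antisymm
    (jn_le (aux_rdisjoint_zero_right f) (aux_rle_refl f) (aux_rle_zero f))
    (le_jn_left (aux_rdisjoint_zero_right f))

lemma aux_zero_jn {A B : D} (f : A ⟶ B) : jn 0 f = f :=
  aux_rle_antisymm
    (jn_le (aux_rdisjoint_zero_left f) (aux_rle_zero f) (aux_rle_refl f))
    (le_jn_right (aux_rdisjoint_zero_left f))

lemma rdisjoint_E (X Y : D) : RDisjoint D (E1 X Y) (E2 X Y) := by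
  constructor
  · rw [rest_E2, E2_E1]
  · rw [dag_E2, dag_E1, rest_E2, E2_E1]

lemma jn_E (X Y : D) : jn (E1 X Y) (E2 X Y) = 𝟙 (X ⊗ Y) := by
  apply DisjointnessTensor.jointly_epic
  · rw [comp_jn (rdisjoint_E X Y), qinl_E1, qinl_E2, aux_jn_zero, Category.comp_id]
  · rw [comp_jn (rdisjoint_E X Y), qinr_E1, qinr_E2, aux_zero_jn, Category.comp_id]

lemma aux_sandwich {X Y W : D} (t : Y ⟶ W) :
    rest (dag (qinr D X Y) ≫ t) ≫ dag (qinl D X Y) = 0 := by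
  have h1 : E2 X Y ≫ rest (dag (qinr D X Y) ≫ t) = rest (dag (qinr D X Y) ≫ t) := by
    rw [← rest_dag_qinr]
    exact aux_rest_comp_le _ _
  have h2 : E2 X Y ≫ rest (dag (qinr D X Y) ≫ t)
      = rest (dag (qinr D X Y) ≫ t) ≫ E2 X Y := by
    rw [← rest_dag_qinr]
    exact rest_comm _ _
  calc rest (dag (qinr D X Y) ≫ t) ≫ dag (qinl D X Y)
      = (E2 X Y ≫ rest (dag (qinr D X Y) ≫ t)) ≫ dag (qinl D X Y) := by rw [h1]
    _ = (rest (dag (qinr D X Y) ≫ t) ≫ E2 X Y) ≫ dag (qinl D X Y) := by rw [h2]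
    _ = rest (dag (qinr D X Y) ≫ t) ≫ (E2 X Y ≫ dag (qinl D X Y)) := by
        rw [Category.assoc]
    _ = 0 := by rw [E2_dag_qinl, comp_zero]

end AuxEIC

/-- In an extensive inverse category, every decision is recovered from its components:
⟨f⟩ = (∐₁ ∘ \overline{∐₁† ∘ ⟨f⟩}) ∨ (∐₂ ∘ \overline{∐₂† ∘ ⟨f⟩}), and \overline{⟨f⟩} = \overline{f}. -/
theorem dec_recover {C : Type u} [Category.{v} C] [MonoidalCategory C]
    [SymmetricCategory C] [HasZeroMorphisms C] [InverseCategory C] [DisjointnessTensor C]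
    [DisjointJoins C] [ExtensiveInverseCategory C]
    {A B B' : C} (f : A ⟶ B ⊗ B') :
    dec f = jn (rest (dec f ≫ dag (qinl C A A)) ≫ qinl C A A)
               (rest (dec f ≫ dag (qinr C A A)) ≫ qinr C A A) ∧
    rest (dec (C := C) f) = rest f := by
  have hr1f : rest (f ≫ E1 B B') ≫ f = f ≫ E1 B B' := by
    rw [← rest_swap f (E1 B B'), rest_E1]
  have hr2f : rest (f ≫ E2 B B') ≫ f = f ≫ E2 B B' := by
    rw [← rest_swap f (E2 B B'), rest_E2]
  have hr21 : rest (f ≫ E2 B B') ≫ rest (f ≫ E1 B B') = 0 := by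
    rw [aux_rest_merge, rest_E2, E2_E1, comp_zero, aux_rest_zero]
  have hdisj_fE : RDisjoint C (f ≫ E1 B B') (f ≫ E2 B B') := by
    constructor
    · rw [← Category.assoc, hr2f, Category.assoc, E2_E1, comp_zero]
    · rw [aux_dag_comp, aux_dag_comp, dag_E1, dag_E2]
      have h : rest (E2 B B' ≫ dag f) = rest (dag f) ≫ E2 B B' := by
        calc rest (E2 B B' ≫ dag f) = rest (rest (E2 B B') ≫ dag f) := by rw [rest_E2]
          _ = rest (E2 B B') ≫ rest (dag f) := rest_comp_rest _ _
          _ = rest (dag f) ≫ rest (E2 B B') := rest_comm _ _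
          _ = rest (dag f) ≫ E2 B B' := by rw [rest_E2]
      rw [h, Category.assoc, ← Category.assoc (E2 B B'), E2_E1, zero_comp, comp_zero]
  have hfdec : jn (f ≫ E1 B B') (f ≫ E2 B B') = f := by
    rw [← comp_jn (rdisjoint_E B B') f, jn_E, Category.comp_id]
  have hrestf : rest f = jn (rest (f ≫ E1 B B')) (rest (f ≫ E2 B B')) := by
    conv_lhs => rw [← hfdec]
    exact rest_jn hdisj_fE
  -- the candidate decision
  have hdisj_pq : RDisjoint C (rest (f ≫ E1 B B') ≫ qinl C A A)
      (rest (f ≫ E2 B B') ≫ qinr C A A) := by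
    constructor
    · have h : rest (rest (f ≫ E2 B B') ≫ qinr C A A) = rest (f ≫ E2 B B') := by
        rw [← aux_rest_comp', aux_rest_qinr, Category.comp_id, aux_rest_rest]
      rw [h, ← Category.assoc, hr21, zero_comp]
    · rw [aux_dag_comp, aux_dag_comp, aux_dag_rest, aux_dag_rest,
        ← Category.assoc, aux_sandwich, zero_comp]
  have hcomp1 : jn (rest (f ≫ E1 B B') ≫ qinl C A A)
      (rest (f ≫ E2 B B') ≫ qinr C A A) ≫ dag (qinl C A A) = rest (f ≫ E1 B B') := by
    rw [jn_comp hdisj_pq, Category.assoc, Category.assoc, qinl_dag_qinl,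
      qinr_dag_qinl, Category.comp_id, comp_zero, aux_jn_zero]
  have hcomp2 : jn (rest (f ≫ E1 B B') ≫ qinl C A A)
      (rest (f ≫ E2 B B') ≫ qinr C A A) ≫ dag (qinr C A A) = rest (f ≫ E2 B B') := by
    rw [jn_comp hdisj_pq, Category.assoc, Category.assoc, qinl_dag_qinr,
      qinr_dag_qinr, Category.comp_id, comp_zero, aux_zero_jn]
  have hdisj_Eq : RDisjoint C (E1 B B' ≫ qinl C (B ⊗ B') (B ⊗ B'))
      (E2 B B' ≫ qinr C (B ⊗ B') (B ⊗ B')) := by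
    constructor
    · have h : rest (E2 B B' ≫ qinr C (B ⊗ B') (B ⊗ B')) = E2 B B' := by
        rw [← aux_rest_comp', aux_rest_qinr, Category.comp_id, rest_E2]
      rw [h, ← Category.assoc, E2_E1, zero_comp]
    · rw [aux_dag_comp, aux_dag_comp, dag_E1, dag_E2,
        ← Category.assoc, aux_sandwich, zero_comp]
  have hkey : jn (E1 B B' ≫ qinl C (B ⊗ B') (B ⊗ B'))
      (E2 B B' ≫ qinr C (B ⊗ B') (B ⊗ B')) = qinl C B B' ⊗ₘ qinr C B B' := by
    apply DisjointnessTensor.jointly_epic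
    · rw [comp_jn hdisj_Eq, ← Category.assoc, ← Category.assoc, qinl_E1, qinl_E2,
        zero_comp, aux_jn_zero, qinl_natural]
    · rw [comp_jn hdisj_Eq, ← Category.assoc, ← Category.assoc, qinr_E1, qinr_E2,
        zero_comp, aux_zero_jn, qinr_natural]
  have hD2 : jn (rest (f ≫ E1 B B') ≫ qinl C A A)
      (rest (f ≫ E2 B B') ≫ qinr C A A) ≫ (f ⊗ₘ f)
      = f ≫ (qinl C B B' ⊗ₘ qinr C B B') := by
    rw [jn_comp hdisj_pq, Category.assoc, Category.assoc, qinl_natural f f,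
      qinr_natural f f, ← Category.assoc, ← Category.assoc, hr1f, hr2f,
      Category.assoc, Category.assoc, ← comp_jn hdisj_Eq f, hkey]
  have hdec : IsDecision C f (jn (rest (f ≫ E1 B B') ≫ qinl C A A)
      (rest (f ≫ E2 B B') ≫ qinr C A A)) := by
    constructor
    · rw [hcomp1, hcomp2]
      exact hrestf.symm
    · exact hD2
  have hDf : dec f = jn (rest (f ≫ E1 B B') ≫ qinl C A A)
      (rest (f ≫ E2 B B') ≫ qinr C A A) := (dec_unique f _ hdec).symm
  constructor
  · rw [hDf, hcomp1, hcomp2, aux_rest_rest, aux_rest_rest]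
  · rw [hDf, rest_jn hdisj_pq]
    have h1 : rest (rest (f ≫ E1 B B') ≫ qinl C A A) = rest (f ≫ E1 B B') := by
      rw [← aux_rest_comp', aux_rest_qinl, Category.comp_id, aux_rest_rest]
    have h2 : rest (rest (f ≫ E2 B B') ≫ qinr C A A) = rest (f ≫ E2 B B') := by
      rw [← aux_rest_comp', aux_rest_qinr, Category.comp_id, aux_rest_rest]
    rw [h1, h2]
    exact hrestf.symm
end
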